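/- Let f : ℍⁿ \ {0} → ℝ be homogeneous of degree λ and C² away from 0. Then there exists C > 0 such that |f(ξη) + f(ξη⁻¹) − 2f(ξ)| ≤ C|η|²|ξ|^{λ−2} whenever |η| ≤ |ξ|/2. -/

import Mathlib

open MeasureTheory Filter Set
open scoped BigOperators ENNReal NNReal Real Topology

noncomputable section

/-- The Heisenberg group `ℍⁿ = ℂⁿ × ℝ` (as a set, with Euclidean structure on `ℂⁿ`). -/
abbrev Hgrp (n : ℕ) : Type := EuclideanSpace ℂ (Fin n) × ℝ

/-- Heisenberg group multiplication `(z,t)(w,s) = (z+w, t+s+2 Im (z ⬝ conj w))`. -/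
def hmul {n : ℕ} (ξ η : Hgrp n) : Hgrp n :=
  (ξ.1 + η.1, ξ.2 + η.2 + 2 * (∑ j, ξ.1 j * (starRingEnd ℂ) (η.1 j)).im)

/-- Heisenberg group inverse `(z,t)⁻¹ = (-z,-t)`. -/
def hinv {n : ℕ} (ξ : Hgrp n) : Hgrp n := (-ξ.1, -ξ.2)

/-- Anisotropic dilations `δ_r(z,t) = (rz, r²t)`. -/
def dil {n : ℕ} (r : ℝ) (ξ : Hgrp n) : Hgrp n := (r • ξ.1, r ^ 2 * ξ.2)

/-- Homogeneous norm `|(z,t)| = (|z|⁴ + t²)^{1/4}`. -/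
def hnorm {n : ℕ} (ξ : Hgrp n) : ℝ := (‖ξ.1‖ ^ 4 + ξ.2 ^ 2) ^ ((1 : ℝ) / 4)

/-- Homogeneous dimension `Q = 2n+2` (as a real number). -/
def Qdim (n : ℕ) : ℝ := 2 * n + 2

instance (n : ℕ) : MeasurableSpace (EuclideanSpace ℂ (Fin n)) :=
  MeasurableSpace.comap (WithLp.ofLp (p := 2)) (inferInstance : MeasurableSpace (∀ _ : Fin n, ℂ))

instance (n : ℕ) : MeasureSpace (EuclideanSpace ℂ (Fin n)) :=
  ⟨Measure.map (WithLp.toLp 2 : (Fin n → ℂ) → EuclideanSpace ℂ (Fin n)) (volume : Measure (∀ _ : Fin n, ℂ))⟩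

/-!
By homogeneity it suffices to take `|ξ| = 1` and `|η| ≤ 1/2`. Left translation by `ξ` is affine
in the Euclidean coordinates, so `ξη` and `ξη⁻¹` are `ξ ± v` with `v = ξη - ξ`, and the segment
between them consists of the points `ξ (s η)`, `|s| ≤ 1`. These lie in the compact set
`{ξζ : |ξ| = 1, |ζ| ≤ 1/2}`, which misses `0` because `ξζ = 0` forces `ζ = ξ⁻¹`. The second
derivative of `f` is bounded there, so the Euclidean second-difference estimate bounds the
left-hand side by a multiple of `‖v‖² ≲ |η|²`.
-/

section SecondDifference

variable {E F : Type*} [NormedAddCommGroup E] [NormedSpace ℝ E] [NormedAddCommGroup F]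
  [NormedSpace ℝ F]

lemma image_add_smul_Icc_neg_one_one (a h : E) :
    (fun s : ℝ => a + s • h) '' Icc (-1) 1 = segment ℝ (a - h) (a + h) := by
  have hline : (fun s : ℝ => a + s • h) = AffineMap.lineMap a (a + h) := by
    funext s
    rw [AffineMap.lineMap_apply_module]
    module
  rw [hline, ← segment_eq_Icc (by norm_num), image_segment]
  congr 1 <;> · simp only [AffineMap.lineMap_apply_module]; module

lemma add_smul_mem_segment {a h : E} {s : ℝ} (hs : |s| ≤ 1) :
    a + s • h ∈ segment ℝ (a - h) (a + h) :=
  image_add_smul_Icc_neg_one_one a h ▸ ⟨s, abs_le.1 hs, rfl⟩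

/-- Along `s ↦ f (a + s h) + f (a - s h)` the derivative is `(f' (a + s h) - f' (a - s h)) h`,
and the bound on `f''` makes `f'` Lipschitz on the segment. -/
lemma norm_add_add_sub_two_smul_le {f : E → F} {f' : E → E →L[ℝ] F}
    {f'' : E → E →L[ℝ] E →L[ℝ] F} {a h : E} {M : ℝ}
    (hf : ∀ x ∈ segment ℝ (a - h) (a + h), HasFDerivAt f (f' x) x)
    (hf' : ∀ x ∈ segment ℝ (a - h) (a + h),
      HasFDerivWithinAt f' (f'' x) (segment ℝ (a - h) (a + h)) x)
    (hM : ∀ x ∈ segment ℝ (a - h) (a + h), ‖f'' x‖ ≤ M) :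
    ‖f (a + h) + f (a - h) - (2 : ℝ) • f a‖ ≤ 2 * M * ‖h‖ ^ 2 := by
  have mem_pos : ∀ s ∈ Icc (0 : ℝ) 1, a + s • h ∈ segment ℝ (a - h) (a + h) := fun s hs =>
    add_smul_mem_segment (abs_le.2 ⟨by linarith [hs.1], hs.2⟩)
  have mem_neg : ∀ s ∈ Icc (0 : ℝ) 1, a - s • h ∈ segment ℝ (a - h) (a + h) := fun s hs => by
    simpa [neg_smul, ← sub_eq_add_neg] using add_smul_mem_segment (a := a) (h := h) (s := -s)
      (abs_le.2 ⟨by linarith [hs.2], by linarith [hs.1]⟩)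
  have hderiv : ∀ s ∈ Icc (0 : ℝ) 1, HasDerivAt (fun s : ℝ => f (a + s • h) + f (a - s • h))
      (f' (a + s • h) h - f' (a - s • h) h) s := fun s hs => by
    have hp : HasDerivAt (fun s : ℝ => a + s • h) h s := by
      simpa using ((hasDerivAt_id s).smul_const h).const_add a
    have hm : HasDerivAt (fun s : ℝ => a - s • h) (-h) s := by
      simpa using ((hasDerivAt_id s).smul_const h).const_sub a
    have hsum := ((hf _ (mem_pos s hs)).comp_hasDerivAt s hp).add
      ((hf _ (mem_neg s hs)).comp_hasDerivAt s hm)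
    rwa [map_neg, ← sub_eq_add_neg] at hsum
  have hbound : ∀ s ∈ Ico (0 : ℝ) 1, ‖f' (a + s • h) h - f' (a - s • h) h‖ ≤ 2 * M * ‖h‖ ^ 2 := by
    intro s hs
    have hs' : s ∈ Icc (0 : ℝ) 1 := Ico_subset_Icc_self hs
    have hM0 : 0 ≤ M := (norm_nonneg (f'' (a + s • h))).trans (hM _ (mem_pos s hs'))
    have hlip := (convex_segment _ _).norm_image_sub_le_of_norm_hasFDerivWithin_le hf' hM
      (mem_neg s hs') (mem_pos s hs')
    have hdiff : a + s • h - (a - s • h) = (2 * s) • h := by module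
    rw [hdiff, norm_smul, Real.norm_of_nonneg (by linarith [hs.1])] at hlip
    calc ‖f' (a + s • h) h - f' (a - s • h) h‖
        = ‖(f' (a + s • h) - f' (a - s • h)) h‖ := rfl
      _ ≤ M * (2 * s * ‖h‖) * ‖h‖ := (ContinuousLinearMap.le_opNorm _ _).trans (by gcongr)
      _ ≤ 2 * M * ‖h‖ ^ 2 := by
        have : s * (M * ‖h‖ ^ 2) ≤ 1 * (M * ‖h‖ ^ 2) := by gcongr; exact hs.2.le
        nlinarith
  have key := norm_image_sub_le_of_norm_deriv_le_segment'
    (fun s hs => (hderiv s hs).hasDerivWithinAt) hbound 1 (right_mem_Icc.2 zero_le_one)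
  simpa [two_smul, add_sub_add_comm] using key

end SecondDifference

section Heisenberg

variable {n : ℕ}

lemma hnorm_nonneg (ξ : Hgrp n) : 0 ≤ hnorm ξ := Real.rpow_nonneg (by positivity) _

lemma hnorm_pow_four (ξ : Hgrp n) : hnorm ξ ^ 4 = ‖ξ.1‖ ^ 4 + ξ.2 ^ 2 := by
  rw [hnorm, ← Real.rpow_natCast, ← Real.rpow_mul (by positivity)]
  norm_num

lemma hnorm_le_hnorm_iff {ξ η : Hgrp n} :
    hnorm ξ ≤ hnorm η ↔ ‖ξ.1‖ ^ 4 + ξ.2 ^ 2 ≤ ‖η.1‖ ^ 4 + η.2 ^ 2 := by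
  rw [← hnorm_pow_four, ← hnorm_pow_four]
  exact (pow_le_pow_iff_left₀ (hnorm_nonneg ξ) (hnorm_nonneg η) (by norm_num)).symm

lemma hnorm_eq_zero {ξ : Hgrp n} : hnorm ξ = 0 ↔ ξ = 0 := by
  rw [← pow_eq_zero_iff (n := 4) (by norm_num), hnorm_pow_four, Prod.ext_iff]
  have h4 := pow_nonneg (norm_nonneg ξ.1) 4
  have h2 := sq_nonneg ξ.2
  simp only [Prod.fst_zero, Prod.snd_zero, ← norm_eq_zero (a := ξ.1)]
  constructor
  · intro h
    exact ⟨pow_eq_zero_iff (n := 4) (by norm_num) |>.mp (by linarith),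
      pow_eq_zero_iff (n := 2) (by norm_num) |>.mp (by linarith)⟩
  · rintro ⟨hfst, hsnd⟩
    simp [hfst, hsnd]

lemma norm_fst_le_hnorm (ξ : Hgrp n) : ‖ξ.1‖ ≤ hnorm ξ := by
  refine le_of_pow_le_pow_left₀ (by norm_num) (hnorm_nonneg ξ) (n := 4) ?_
  rw [hnorm_pow_four]
  nlinarith [sq_nonneg ξ.2]

lemma abs_snd_le_hnorm_sq (ξ : Hgrp n) : |ξ.2| ≤ hnorm ξ ^ 2 := by
  refine le_of_pow_le_pow_left₀ two_ne_zero (by positivity) ?_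
  rw [sq_abs, ← pow_mul, hnorm_pow_four]
  nlinarith [pow_nonneg (norm_nonneg ξ.1) 4]

lemma hnorm_dil {r : ℝ} (hr : 0 ≤ r) (ξ : Hgrp n) : hnorm (dil r ξ) = r * hnorm ξ := by
  have h : ‖(dil r ξ).1‖ ^ 4 + (dil r ξ).2 ^ 2 = r ^ 4 * (‖ξ.1‖ ^ 4 + ξ.2 ^ 2) := by
    simp only [dil, norm_smul, Real.norm_of_nonneg hr]
    ring
  rw [hnorm, h, Real.mul_rpow (by positivity) (by positivity), ← Real.rpow_natCast,
    ← Real.rpow_mul hr]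
  norm_num [hnorm]

lemma hnorm_smul_le {s : ℝ} (hs : |s| ≤ 1) (ξ : Hgrp n) : hnorm (s • ξ) ≤ hnorm ξ := by
  have hs2 : s ^ 2 ≤ 1 := (sq_le_one_iff_abs_le_one s).2 hs
  have hs4 : s ^ 4 ≤ 1 := by
    rw [show s ^ 4 = (s ^ 2) ^ 2 by ring]; exact pow_le_one₀ (sq_nonneg s) hs2
  rw [hnorm_le_hnorm_iff, Prod.smul_fst, Prod.smul_snd, norm_smul, smul_eq_mul, mul_pow, mul_pow,
    Real.norm_eq_abs, pow_abs, abs_of_nonneg (by positivity : (0:ℝ) ≤ s ^ 4)]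
  gcongr
  · exact mul_le_of_le_one_left (by positivity) hs4
  · exact mul_le_of_le_one_left (by positivity) hs2

lemma hnorm_hinv (ξ : Hgrp n) : hnorm (hinv ξ) = hnorm ξ := by
  simp [hnorm, hinv]

lemma dil_hmul (r : ℝ) (ξ η : Hgrp n) : dil r (hmul ξ η) = hmul (dil r ξ) (dil r η) := by
  have hsum : (∑ j, (r • ξ.1) j * (starRingEnd ℂ) ((r • η.1) j)) =
      ((r ^ 2 : ℝ) : ℂ) * ∑ j, ξ.1 j * (starRingEnd ℂ) (η.1 j) := by
    rw [Finset.mul_sum]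
    refine Finset.sum_congr rfl fun j _ => ?_
    simp only [PiLp.smul_apply, Complex.real_smul, map_mul, Complex.conj_ofReal]
    push_cast
    ring
  refine Prod.ext (by simp [dil, hmul, smul_add]) ?_
  simp only [dil, hmul, hsum, Complex.im_ofReal_mul]
  ring

lemma dil_hinv (r : ℝ) (ξ : Hgrp n) : dil r (hinv ξ) = hinv (dil r ξ) := by
  simp [dil, hinv]

lemma dil_dil_inv {r : ℝ} (hr : r ≠ 0) (ξ : Hgrp n) : dil r (dil r⁻¹ ξ) = ξ := by
  ext
  · simp [dil, smul_smul, hr]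
  · simp only [dil]
    field_simp

lemma hmul_smul (ξ η : Hgrp n) (s : ℝ) : hmul ξ (s • η) = ξ + s • (hmul ξ η - ξ) := by
  have hsum : (∑ j, ξ.1 j * (starRingEnd ℂ) ((s • η.1) j)) =
      (s : ℂ) * ∑ j, ξ.1 j * (starRingEnd ℂ) (η.1 j) := by
    rw [Finset.mul_sum]
    refine Finset.sum_congr rfl fun j _ => ?_
    simp only [PiLp.smul_apply, Complex.real_smul, map_mul, Complex.conj_ofReal]
    ring
  ext
  · simp [hmul]
  · simp only [hmul, Prod.smul_snd, Prod.snd_add, Prod.snd_sub, Prod.smul_fst, hsum,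
      Complex.im_ofReal_mul, smul_eq_mul]
    ring

lemma hmul_hinv (ξ η : Hgrp n) : hmul ξ (hinv η) = ξ - (hmul ξ η - ξ) := by
  rw [show hinv η = (-1 : ℝ) • η from (neg_one_smul ℝ η).symm, hmul_smul]
  module

lemma eq_hinv_of_hmul_eq_zero {ξ η : Hgrp n} (h : hmul ξ η = 0) : η = hinv ξ := by
  have h1 : η.1 = -ξ.1 := eq_neg_of_add_eq_zero_right (congrArg Prod.fst h)
  have him : (∑ j, ξ.1 j * (starRingEnd ℂ) (η.1 j)).im = 0 := by
    simp [h1, Complex.mul_conj]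
  have h2 : ξ.2 + η.2 = 0 := by
    simpa [hmul, him] using congrArg Prod.snd h
  exact Prod.ext h1 (eq_neg_of_add_eq_zero_right h2)

lemma hmul_ne_zero_of_hnorm_lt {ξ η : Hgrp n} (h : hnorm η < hnorm ξ) : hmul ξ η ≠ 0 :=
  fun h0 => h.ne (by rw [eq_hinv_of_hmul_eq_zero h0, hnorm_hinv])

lemma abs_im_sum_mul_conj_le (z w : EuclideanSpace ℂ (Fin n)) :
    |(∑ j, z j * (starRingEnd ℂ) (w j)).im| ≤ ‖z‖ * ‖w‖ := by
  have h : (∑ j, z j * (starRingEnd ℂ) (w j)) = inner ℂ w z := by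
    rw [PiLp.inner_apply]
    exact Finset.sum_congr rfl fun j _ => by simp [RCLike.inner_apply]
  rw [h, mul_comm]
  exact (Complex.abs_im_le_norm _).trans (norm_inner_le_norm w z)

lemma norm_hmul_sub_le (ξ η : Hgrp n) :
    ‖hmul ξ η - ξ‖ ≤ hnorm η * (1 + hnorm η + 2 * hnorm ξ) := by
  have h1 := norm_fst_le_hnorm η
  have h2 := abs_snd_le_hnorm_sq η
  have h3 := abs_im_sum_mul_conj_le ξ.1 η.1
  have h4 := mul_le_mul (norm_fst_le_hnorm ξ) h1 (norm_nonneg _) (hnorm_nonneg ξ)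
  have h0 := hnorm_nonneg η
  have h5 := hnorm_nonneg ξ
  rw [Prod.norm_def]
  refine max_le ?_ ?_
  · simp only [hmul, Prod.fst_sub, add_sub_cancel_left]
    nlinarith
  · simp only [hmul, Prod.snd_sub, add_assoc, add_sub_cancel_left, Real.norm_eq_abs]
    refine (abs_add_le _ _).trans ?_
    rw [abs_mul, abs_two]
    nlinarith

lemma continuous_hnorm : Continuous (hnorm (n := n)) :=
  (Real.continuous_rpow_const (by norm_num)).comp (by fun_prop)

lemma continuous_hmul : Continuous fun p : Hgrp n × Hgrp n => hmul p.1 p.2 := by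
  unfold hmul
  fun_prop

lemma isCompact_setOf_hnorm_le (R : ℝ) : IsCompact {ξ : Hgrp n | hnorm ξ ≤ R} := by
  refine Metric.isCompact_of_isClosed_isBounded (isClosed_le continuous_hnorm continuous_const) ?_
  refine (Metric.isBounded_closedBall (x := 0) (r := max R (R ^ 2))).subset fun ξ hξ => ?_
  have hR : 0 ≤ hnorm ξ := hnorm_nonneg ξ
  have h1 := norm_fst_le_hnorm ξ
  have h2 := abs_snd_le_hnorm_sq ξ
  rw [mem_closedBall_zero_iff, Prod.norm_def, Real.norm_eq_abs]
  exact max_le_max (h1.trans hξ) (h2.trans (pow_le_pow_left₀ hR hξ 2))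

lemma exists_bound_hmul_of_continuousOn {F : Type*} [NormedAddCommGroup F] {g : Hgrp n → F}
    (hg : ContinuousOn g {0}ᶜ) :
    ∃ M, ∀ ξ η : Hgrp n, hnorm ξ = 1 → hnorm η ≤ 1 / 2 → ‖g (hmul ξ η)‖ ≤ M := by
  set K := {ξ : Hgrp n | hnorm ξ = 1} ×ˢ {η : Hgrp n | hnorm η ≤ 1 / 2}
  have hK : IsCompact K := by
    refine IsCompact.prod ?_ (isCompact_setOf_hnorm_le _)
    exact (isCompact_setOf_hnorm_le 1).of_isClosed_subset
      (isClosed_eq continuous_hnorm continuous_const) fun ξ hξ => le_of_eq hξ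
  have hK0 : (fun p : Hgrp n × Hgrp n => hmul p.1 p.2) '' K ⊆ {0}ᶜ := by
    rintro _ ⟨⟨ξ, η⟩, ⟨hξ : hnorm ξ = 1, hη : hnorm η ≤ 1 / 2⟩, rfl⟩
    exact hmul_ne_zero_of_hnorm_lt (by linarith)
  obtain ⟨M, hM⟩ := (hK.image continuous_hmul).exists_bound_of_continuousOn (hg.mono hK0)
  exact ⟨M, fun ξ η hξ hη => hM _ ⟨(ξ, η), ⟨hξ, hη⟩, rfl⟩⟩

lemma exists_second_difference_le_of_hnorm_eq_one {f : Hgrp n → ℝ}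
    (hreg : ContDiffOn ℝ 2 f {0}ᶜ) :
    ∃ C, 0 < C ∧ ∀ ξ η : Hgrp n, hnorm ξ = 1 → hnorm η ≤ 1 / 2 →
      |f (hmul ξ η) + f (hmul ξ (hinv η)) - 2 * f ξ| ≤ C * hnorm η ^ 2 := by
  have hU : IsOpen ({0}ᶜ : Set (Hgrp n)) := isOpen_compl_singleton
  have hf1 : ContDiffOn ℝ 1 (fderiv ℝ f) {0}ᶜ := hreg.fderiv_of_isOpen hU (by norm_num)
  obtain ⟨M, hM⟩ := exists_bound_hmul_of_continuousOn (hf1.continuousOn_fderiv_of_isOpen hU le_rfl)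
  refine ⟨49 / 2 * max M 1, by positivity, fun ξ η hξ hη => ?_⟩
  set v := hmul ξ η - ξ with hv_def
  have hseg : ∀ x ∈ segment ℝ (ξ - v) (ξ + v),
      x ∈ ({0}ᶜ : Set (Hgrp n)) ∧ ‖fderiv ℝ (fderiv ℝ f) x‖ ≤ max M 1 := by
    rw [← image_add_smul_Icc_neg_one_one]
    rintro _ ⟨s, hs, rfl⟩
    have hsη : hnorm (s • η) ≤ 1 / 2 := (hnorm_smul_le (abs_le.2 hs) η).trans hη
    dsimp only
    rw [hv_def, ← hmul_smul]
    exact ⟨hmul_ne_zero_of_hnorm_lt (by linarith), (hM ξ _ hξ hsη).trans (le_max_left _ _)⟩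
  have hdiff := norm_add_add_sub_two_smul_le
    (fun x hx => ((hreg.differentiableOn two_ne_zero).differentiableAt
      (hU.mem_nhds (hseg x hx).1)).hasFDerivAt)
    (fun x hx => ((hf1.differentiableOn one_ne_zero).differentiableAt
      (hU.mem_nhds (hseg x hx).1)).hasFDerivAt.hasFDerivWithinAt)
    (fun x hx => (hseg x hx).2)
  rw [add_sub_cancel, ← hmul_hinv, smul_eq_mul, Real.norm_eq_abs] at hdiff
  have hv : ‖v‖ ≤ 7 / 2 * hnorm η := by
    have := norm_hmul_sub_le ξ η
    rw [hξ] at this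
    nlinarith [hnorm_nonneg η]
  calc _ ≤ 2 * max M 1 * ‖v‖ ^ 2 := hdiff
    _ ≤ 2 * max M 1 * (7 / 2 * hnorm η) ^ 2 := by gcongr
    _ = 49 / 2 * max M 1 * hnorm η ^ 2 := by ring

lemma second_difference_dil {lam : ℝ} {f : Hgrp n → ℝ}
    (hhom : ∀ r : ℝ, 0 < r → ∀ ξ : Hgrp n, f (dil r ξ) = r ^ lam * f ξ) {r : ℝ} (hr : 0 < r)
    (ξ η : Hgrp n) :
    f (hmul (dil r ξ) (dil r η)) + f (hmul (dil r ξ) (hinv (dil r η))) - 2 * f (dil r ξ) =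
      r ^ lam * (f (hmul ξ η) + f (hmul ξ (hinv η)) - 2 * f ξ) := by
  rw [← dil_hinv, ← dil_hmul, ← dil_hmul, hhom r hr, hhom r hr, hhom r hr]
  ring

end Heisenberg

/-- Second-order Folland–Stein estimate for homogeneous `C²` functions. -/
theorem stmt3 (n : ℕ) (lam : ℝ) (f : Hgrp n → ℝ)
    (hhom : ∀ r : ℝ, 0 < r → ∀ ξ : Hgrp n, f (dil r ξ) = r ^ lam * f ξ)
    (hreg : ContDiffOn ℝ 2 f {(0 : Hgrp n)}ᶜ) :
    ∃ C : ℝ, 0 < C ∧ ∀ ξ η : Hgrp n, hnorm η ≤ hnorm ξ / 2 →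
      |f (hmul ξ η) + f (hmul ξ (hinv η)) - 2 * f ξ| ≤
        C * hnorm η ^ 2 * hnorm ξ ^ (lam - 2) := by
  obtain ⟨C, hC, hunit⟩ := exists_second_difference_le_of_hnorm_eq_one hreg
  refine ⟨C, hC, fun ξ η hle => ?_⟩
  rcases eq_or_ne ξ 0 with rfl | hξ
  · have hη : η = 0 := hnorm_eq_zero.1 <|
      le_antisymm (by simpa [hnorm_eq_zero.2 rfl] using hle) (hnorm_nonneg η)
    subst hη
    have h00 : hmul (0 : Hgrp n) 0 = 0 := by ext <;> simp [hmul]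
    rw [show hinv (0 : Hgrp n) = 0 from neg_zero, h00, hnorm_eq_zero.2 rfl,
      show f 0 + f 0 - 2 * f 0 = 0 by ring]
    simp
  set R := hnorm ξ
  have hR : 0 < R := (hnorm_nonneg ξ).lt_of_ne' (mt hnorm_eq_zero.1 hξ)
  have hξ' : hnorm (dil R⁻¹ ξ) = 1 := by rw [hnorm_dil (by positivity), inv_mul_cancel₀ hR.ne']
  have hη' : hnorm (dil R⁻¹ η) ≤ 1 / 2 := by
    rw [hnorm_dil (by positivity), inv_mul_le_iff₀ hR]
    linarith
  have hscale := second_difference_dil hhom hR (dil R⁻¹ ξ) (dil R⁻¹ η)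
  rw [dil_dil_inv hR.ne', dil_dil_inv hR.ne'] at hscale
  rw [hscale, abs_mul, abs_of_pos (Real.rpow_pos_of_pos hR lam)]
  calc _ ≤ R ^ lam * (C * hnorm (dil R⁻¹ η) ^ 2) := by gcongr; exact hunit _ _ hξ' hη'
    _ = C * hnorm η ^ 2 * R ^ (lam - 2) := by
      rw [hnorm_dil (by positivity), Real.rpow_sub hR, Real.rpow_two]
      field_simp
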